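/- Let S be a numerical semigroup generated by m₁,...,mₙ, and let b ∈ S have exactly two factorizations, corresponding to monomials M and N with gcd(M,N) = 1. Then for the k-lifting S_k (gcd(k,m₁)=1), the element kb ∈ S_k has exactly two factorizations, corresponding to the monomials M_k and N_k obtained by multiplying the x₁-exponent by k. -/

import Mathlib

/-!
Lifting multiplies every generator but `m₁` by `k`, so modulo `k` a factorization `v` of `k b` in
`S_k` only sees `v₁ m₁`; since `gcd(k, m₁) = 1`, `k` divides `v₁`. Hence `P ↦ P_k` is a bijection
from the factorizations of `b` in `S` onto those of `k b` in `S_k`.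
-/

open Function

section Lifting

variable {ι : Type*} [DecidableEq ι]

/-- The generators of `S_k`, with `j` in the role of the index `1`. -/
def liftWeights (k : ℕ) (m : ι → ℕ) (j : ι) : ι → ℕ :=
  fun i => if i = j then m j else k * m i

/-- The monomial `P_k`. -/
def liftFactorization (k : ℕ) (j : ι) (v : ι → ℕ) : ι → ℕ := update v j (k * v j)

theorem liftFactorization_injective {k : ℕ} (hk : k ≠ 0) (j : ι) :
    Injective (liftFactorization k j : (ι → ℕ) → ι → ℕ) := by
  intro v w h
  funext i
  have hi := congrFun h i
  by_cases hij : i = j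
  · subst hij
    simpa [liftFactorization, hk] using hi
  · simpa [liftFactorization, hij] using hi

theorem sum_liftFactorization_mul_liftWeights [Fintype ι] (k : ℕ) (m : ι → ℕ) (j : ι)
    (v : ι → ℕ) :
    ∑ i, liftFactorization k j v i * liftWeights k m j i = k * ∑ i, v i * m i := by
  rw [Finset.mul_sum]
  refine Finset.sum_congr rfl fun i _ => ?_
  by_cases hij : i = j
  · subst hij
    simp only [liftFactorization, liftWeights, update_self, if_true]
    ring
  · simp only [liftFactorization, liftWeights, update_of_ne hij, hij, if_false]
    ring

theorem dvd_of_sum_mul_liftWeights_eq [Fintype ι] {k : ℕ} {m : ι → ℕ} {j : ι}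
    (hkm : Nat.Coprime k (m j)) {v : ι → ℕ} {b : ℕ}
    (hv : ∑ i, v i * liftWeights k m j i = k * b) : k ∣ v j := by
  have hrest : k ∣ ∑ i ∈ {j}ᶜ, v i * liftWeights k m j i :=
    Finset.dvd_sum fun i hi => by
      rw [liftWeights, if_neg (Finset.mem_compl.mp hi ∘ Finset.mem_singleton.mpr)]
      exact (dvd_mul_right k (m i)).mul_left (v i)
  rw [Fintype.sum_eq_add_sum_compl j, liftWeights, if_pos rfl] at hv
  have hj : k ∣ v j * m j := (Nat.dvd_add_left hrest).mp (hv ▸ Dvd.intro b rfl)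
  exact hkm.dvd_of_dvd_mul_right hj

theorem setOf_sum_mul_liftWeights_eq [Fintype ι] {k : ℕ} (hk : k ≠ 0) {m : ι → ℕ} {j : ι}
    (hkm : Nat.Coprime k (m j)) (b : ℕ) :
    {v : ι → ℕ | ∑ i, v i * liftWeights k m j i = k * b}
      = liftFactorization k j '' {v | ∑ i, v i * m i = b} := by
  ext v
  constructor
  · intro hv
    obtain ⟨c, hc⟩ := dvd_of_sum_mul_liftWeights_eq hkm hv
    have hlift : liftFactorization k j (update v j c) = v := by
      rw [liftFactorization, update_self, update_idem, ← hc, update_eq_self]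
    refine ⟨update v j c, ?_, hlift⟩
    apply Nat.eq_of_mul_eq_mul_left (Nat.pos_of_ne_zero hk)
    rw [← sum_liftFactorization_mul_liftWeights, hlift]
    exact hv
  · rintro ⟨v, hv, rfl⟩
    show ∑ i, _ = k * b
    rw [sum_liftFactorization_mul_liftWeights, hv]

end Lifting

theorem lifting_two_factorizations_general (n : ℕ) (m : Fin (n + 1) → ℕ)
    (k : ℕ) (hk : 0 < k) (hkm : Nat.gcd k (m 0) = 1)
    (b : ℕ) (u w : Fin (n + 1) → ℕ) (huw : u ≠ w)
    (hfac : {v : Fin (n + 1) → ℕ | ∑ i, v i * m i = b} = {u, w}) :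
    {v : Fin (n + 1) → ℕ |
        ∑ i, v i * (if i = 0 then m 0 else k * m i) = k * b}
      = {Function.update u 0 (k * u 0), Function.update w 0 (k * w 0)} ∧
    Function.update u 0 (k * u 0) ≠ Function.update w 0 (k * w 0) := by
  refine ⟨?_, (liftFactorization_injective hk.ne' 0).ne huw⟩
  change {v | ∑ i, v i * liftWeights k m 0 i = k * b}
    = {liftFactorization k 0 u, liftFactorization k 0 w}
  rw [setOf_sum_mul_liftWeights_eq hk.ne' hkm, hfac, Set.image_pair]

/-- if b ∈ S has exactly the two factorizations u ≠ w (with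
gcd(M,N) = 1, i.e. no index where both are nonzero), then kb has in the
k-lifting S_k exactly the two factorizations obtained by multiplying the first
exponent by k. -/
theorem lifting_two_factorizations (n : ℕ) (m : Fin (n + 1) → ℕ)
    (hm : ∀ i, 0 < m i) (k : ℕ) (hk : 0 < k) (hkm : Nat.gcd k (m 0) = 1)
    (b : ℕ) (u w : Fin (n + 1) → ℕ) (huw : u ≠ w)
    (hcop : ∀ i, u i = 0 ∨ w i = 0)
    (hfac : {v : Fin (n + 1) → ℕ | ∑ i, v i * m i = b} = {u, w}) :
    {v : Fin (n + 1) → ℕ |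
        ∑ i, v i * (if i = 0 then m 0 else k * m i) = k * b}
      = {Function.update u 0 (k * u 0), Function.update w 0 (k * w 0)} ∧
    Function.update u 0 (k * u 0) ≠ Function.update w 0 (k * w 0) :=
  lifting_two_factorizations_general n m k hk hkm b u w huw hfac
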